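/- Let W : ℝ → ℝ be a C¹, 1-periodic, even function with Lipschitz derivative, ‖W'‖_∞ = 1 and zero average. Let γ > 0, T > 0, N ≥ 1 and let (a_n)_{n≥1} be an N-periodic sequence of positive reals. Let (y_n) be a solution of the rescaled scheme from y₀ (with unique minimizers at each step). Then the limit f_γ(T,(a_n)) := lim_{n→∞} (y₀ − y_n)/n exists and is nonnegative; it does not depend on the initial datum y₀ (any two such solutions starting from different initial data give the same limit); and T ↦ f_γ(T,(a_n)) is nondecreasing. -/

import Mathlib

/-!
Solutions of the scheme are ordered: a larger tilt `T` or a lower previous iterate can only lower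
the next minimiser, by uniqueness of the minimisers (comparison principle). Integer translates of a
solution are solutions because `W` is 1-periodic, and time shifts by multiples of `N` are solutions
because `a` is `N`-periodic. Comparing a solution with such translates shows that the displacement
`y 0 - y n` moves by at most 1 when the initial datum or the tilt changes, and that it is additive
up to an error 1 along multiples of `N`. Fekete's lemma then gives the limit, and the error 1
disappears after division by `n`. The limit is nonnegative because `W (y n) + T * y n` decreases
along the scheme while `W` is bounded.
-/

open Filter

/-- `(y n)` is a solution of the rescaled scheme: at each step `n ≥ 1`, `y n` is
the unique minimizer over `ℝ` of `t ↦ W t + T t + a_n (γ/2)(t - y_{n-1})²`. -/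
def IsRescaledSol (W : ℝ → ℝ) (T γ : ℝ) (a : ℕ → ℝ) (y : ℕ → ℝ) : Prop :=
  ∀ n : ℕ, 1 ≤ n →
    (∀ t : ℝ, W (y n) + T * y n + a n * (γ / 2) * (y n - y (n - 1)) ^ 2 ≤
      W t + T * t + a n * (γ / 2) * (t - y (n - 1)) ^ 2) ∧
    (∀ t : ℝ, (∀ s : ℝ, W t + T * t + a n * (γ / 2) * (t - y (n - 1)) ^ 2 ≤
      W s + T * s + a n * (γ / 2) * (s - y (n - 1)) ^ 2) → t = y n)

open Topology

theorem exists_tendsto_div_of_abs_add_sub_le {v : ℕ → ℝ} {C : ℝ}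
    (h : ∀ m p, |v (m + p) - v m - v p| ≤ C) :
    ∃ ℓ, Tendsto (fun m : ℕ => v m / m) atTop (𝓝 ℓ) := by
  have hsub : Subadditive (fun m => v m + C) := fun m p => by
    linarith [(abs_le.1 (h m p)).2]
  have hlower : ∀ m : ℕ, m * (v 1 - C) ≤ v m + C := by
    intro m
    induction m with
    | zero =>
      have := (abs_le.1 (h 0 0)).2
      simp only [add_zero, Nat.cast_zero, zero_mul] at this ⊢
      linarith
    | succ m ih =>
      push_cast
      linarith [(abs_le.1 (h m 1)).1]
  have hbdd : BddBelow (Set.range fun m : ℕ => (v m + C) / m) := by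
    refine ⟨min 0 (v 1 - C), ?_⟩
    rintro _ ⟨m, rfl⟩
    rcases m.eq_zero_or_pos with rfl | hm
    · simp
    · refine (min_le_right _ _).trans ((le_div_iff₀ (by exact_mod_cast hm)).2 ?_)
      linarith [hlower m]
  refine ⟨hsub.lim, ?_⟩
  simpa [add_div] using (hsub.tendsto_lim hbdd).sub (tendsto_const_div_atTop_nhds_zero_nat C)

theorem tendsto_div_of_tendsto_comp_mul {u : ℕ → ℝ} {N : ℕ} (hN : 0 < N) {D ℓ : ℝ}
    (hrem : ∀ n, |u n - u (n / N * N)| ≤ D)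
    (hu : Tendsto (fun m : ℕ => u (m * N) / m) atTop (𝓝 ℓ)) :
    Tendsto (fun n : ℕ => u n / n) atTop (𝓝 (ℓ / N)) := by
  have hquot : Tendsto (fun n : ℕ => u (n / N * N) / (n / N : ℕ)) atTop (𝓝 ℓ) :=
    hu.comp (Nat.tendsto_div_const_atTop hN.ne')
  have hratio : Tendsto (fun n : ℕ => ((n / N : ℕ) : ℝ) / n) atTop (𝓝 (1 / N)) := by
    have hfloor := (tendsto_nat_floor_div_atTop (R := ℝ)).comp
      ((tendsto_natCast_atTop_atTop (R := ℝ)).atTop_div_const (r := (N : ℝ)) (by positivity))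
    refine (hfloor.div_const (N : ℝ)).congr' ?_
    filter_upwards [eventually_ne_atTop 0] with n hn
    simp only [Function.comp, Nat.floor_div_eq_div]
    field_simp
  have hremainder : Tendsto (fun n : ℕ => (u n - u (n / N * N)) / n) atTop (𝓝 0) :=
    squeeze_zero_norm (fun n => by rw [norm_div, Real.norm_natCast]; gcongr; exact hrem n)
      (tendsto_const_div_atTop_nhds_zero_nat D)
  have := (hquot.mul hratio).add hremainder
  rw [mul_one_div, add_zero] at this
  refine this.congr' ?_
  filter_upwards [eventually_ge_atTop N] with n hn
  have hq : ((n / N : ℕ) : ℝ) ≠ 0 := by exact_mod_cast (Nat.div_pos hn hN).ne'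
  have hn0 : (n : ℝ) ≠ 0 := by exact_mod_cast (hN.trans_le hn).ne'
  field_simp
  ring

theorem exists_tendsto_div_of_abs_mul_add_sub_le {u : ℕ → ℝ} {N : ℕ} (hN : 0 < N) {C : ℝ}
    (h : ∀ m p, |u (m * N + p) - u (m * N) - u p| ≤ C) :
    ∃ ℓ, Tendsto (fun n : ℕ => u n / n) atTop (𝓝 ℓ) := by
  obtain ⟨ℓ, hℓ⟩ := exists_tendsto_div_of_abs_add_sub_le (v := fun m => u (m * N)) fun m p => by
    simpa only [add_mul] using h m (p * N)
  refine ⟨ℓ / N, tendsto_div_of_tendsto_comp_mul hN (D := C + ∑ r ∈ Finset.range N, |u r|)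
    (fun n => ?_) hℓ⟩
  have hsmall : |u (n % N)| ≤ ∑ r ∈ Finset.range N, |u r| :=
    Finset.single_le_sum (fun r _ => abs_nonneg (u r)) (Finset.mem_range.2 (Nat.mod_lt n hN))
  calc |u n - u (n / N * N)|
      = |(u (n / N * N + n % N) - u (n / N * N) - u (n % N)) + u (n % N)| := by
        rw [Nat.div_add_mod']; ring_nf
    _ ≤ C + ∑ r ∈ Finset.range N, |u r| := (abs_add_le _ _).trans (add_le_add (h _ _) hsmall)

theorem le_of_tendsto_div_of_le_add {u v : ℕ → ℝ} {C L M : ℝ} (h : ∀ n, u n ≤ v n + C)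
    (hu : Tendsto (fun n : ℕ => u n / n) atTop (𝓝 L))
    (hv : Tendsto (fun n : ℕ => v n / n) atTop (𝓝 M)) : L ≤ M := by
  have hv' := hv.add (tendsto_const_div_atTop_nhds_zero_nat C)
  rw [add_zero] at hv'
  exact le_of_tendsto_of_tendsto' hu hv' fun n => by
    rw [← add_div]; exact div_le_div_of_nonneg_right (h n) n.cast_nonneg

theorem nonneg_of_tendsto_div_of_bddBelow {u : ℕ → ℝ} {L : ℝ} (hb : BddBelow (Set.range u))
    (hu : Tendsto (fun n : ℕ => u n / n) atTop (𝓝 L)) : 0 ≤ L := by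
  obtain ⟨b, hb⟩ := hb
  refine le_of_tendsto_div_of_le_add (u := fun _ => 0) (C := -b) (fun n => ?_) (by simp) hu
  linarith [hb ⟨n, rfl⟩]

def stepEnergy (W : ℝ → ℝ) (T k p t : ℝ) : ℝ := W t + T * t + k * (t - p) ^ 2

def IsUniqueMinimizer (f : ℝ → ℝ) (x : ℝ) : Prop :=
  (∀ t, f x ≤ f t) ∧ ∀ t, (∀ s, f t ≤ f s) → t = x

theorem IsUniqueMinimizer.of_shift {f g : ℝ → ℝ} {x c d : ℝ} (h : IsUniqueMinimizer f x)
    (hfg : ∀ t, g (t + c) = f t + d) : IsUniqueMinimizer g (x + c) := by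
  have hg : ∀ t, g t = f (t - c) + d := fun t => by rw [← hfg, sub_add_cancel]
  refine ⟨fun t => ?_, fun t ht => ?_⟩
  · rw [hg, hg, add_sub_cancel_right]
    linarith [h.1 (t - c)]
  · have := h.2 (t - c) fun s => by linarith [ht (s + c), hfg s, hg t]
    linarith

theorem stepEnergy_add_add {W : ℝ → ℝ} {c : ℝ} (hW : Function.Periodic W c) (T k p t : ℝ) :
    stepEnergy W T k (p + c) (t + c) = stepEnergy W T k p t + T * c := by
  simp only [stepEnergy, hW t]
  ring

theorem le_of_isUniqueMinimizer_stepEnergy {W : ℝ → ℝ} {T S k p q u v : ℝ} (hk : 0 ≤ k)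
    (hTS : T ≤ S) (hqp : q ≤ p) (hu : ∀ t, stepEnergy W T k p u ≤ stepEnergy W T k p t)
    (hv : IsUniqueMinimizer (stepEnergy W S k q) v) : v ≤ u := by
  by_contra! huv
  -- Passing from `(T, p)` to `(S, q)` favours the smaller point `u`, so `u` minimises too.
  have hcross : stepEnergy W S k q u - stepEnergy W S k q v ≤
      stepEnergy W T k p u - stepEnergy W T k p v := by
    simp only [stepEnergy]
    nlinarith [mul_nonneg (sub_nonneg.2 hTS) (sub_nonneg.2 huv.le),
      mul_nonneg (mul_nonneg hk (sub_nonneg.2 hqp)) (sub_nonneg.2 huv.le)]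
  exact huv.ne (hv.2 u fun s => by linarith [hu v, hv.1 s])

namespace IsRescaledSol

variable {W : ℝ → ℝ} {T S γ : ℝ} {a : ℕ → ℝ} {y z : ℕ → ℝ}

theorem isUniqueMinimizer (hy : IsRescaledSol W T γ a y) (n : ℕ) :
    IsUniqueMinimizer (stepEnergy W T (a (n + 1) * (γ / 2)) (y n)) (y (n + 1)) :=
  hy (n + 1) n.succ_pos

theorem of_isUniqueMinimizer
    (h : ∀ n, IsUniqueMinimizer (stepEnergy W T (a (n + 1) * (γ / 2)) (y n)) (y (n + 1))) :
    IsRescaledSol W T γ a y := by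
  intro n hn
  obtain ⟨m, rfl⟩ := Nat.exists_eq_add_of_le' hn
  exact h m

theorem add_const {c : ℝ} (hW : Function.Periodic W c) (hy : IsRescaledSol W T γ a y) :
    IsRescaledSol W T γ a (fun n => y n + c) :=
  of_isUniqueMinimizer fun n => (hy.isUniqueMinimizer n).of_shift (stepEnergy_add_add hW _ _ _)

theorem comp_add {P : ℕ} (ha : Function.Periodic a P) (hy : IsRescaledSol W T γ a y) :
    IsRescaledSol W T γ a (fun n => y (n + P)) :=
  of_isUniqueMinimizer fun n => by
    have := hy.isUniqueMinimizer (n + P)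
    rwa [Nat.add_right_comm n P 1, ha (n + 1)] at this

theorem le_of_le (hγ : 0 ≤ γ) (ha : ∀ n, 0 ≤ a n) (hTS : T ≤ S)
    (hy : IsRescaledSol W T γ a y) (hz : IsRescaledSol W S γ a z) (h0 : z 0 ≤ y 0) (n : ℕ) :
    z n ≤ y n := by
  induction n with
  | zero => exact h0
  | succ n ih =>
    exact le_of_isUniqueMinimizer_stepEnergy (by have := ha (n + 1); positivity) hTS ih
      (hy.isUniqueMinimizer n).1 (hz.isUniqueMinimizer n)

theorem sub_le_sub_add_one (hW : Function.Periodic W 1) (hγ : 0 ≤ γ) (ha : ∀ n, 0 ≤ a n)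
    (hTS : T ≤ S) (hy : IsRescaledSol W T γ a y) (hz : IsRescaledSol W S γ a z) (n : ℕ) :
    y 0 - y n ≤ z 0 - z n + 1 := by
  set k := ⌈z 0 - y 0⌉
  have hshift := hy.add_const (by simpa using hW.int_mul k)
  have hcmp : z n ≤ y n + k :=
    hshift.le_of_le hγ ha hTS hz (by linarith [Int.le_ceil (z 0 - y 0)]) n
  linarith [Int.ceil_lt_add_one (z 0 - y 0)]

theorem abs_sub_sub_le (hW : Function.Periodic W 1) (hγ : 0 ≤ γ) (ha : ∀ n, 0 ≤ a n)
    {N : ℕ} (haN : Function.Periodic a N) (hy : IsRescaledSol W T γ a y) (m p : ℕ) :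
    |(y 0 - y (m * N + p)) - (y 0 - y (m * N)) - (y 0 - y p)| ≤ 1 := by
  have hz := hy.comp_add (haN.nat_mul m)
  have h₁ := hy.sub_le_sub_add_one hW hγ ha le_rfl hz p
  have h₂ := hz.sub_le_sub_add_one hW hγ ha le_rfl hy p
  simp only [zero_add, add_comm p, Nat.cast_id] at h₁ h₂
  exact abs_le.2 ⟨by linarith, by linarith⟩

theorem antitone_add_mul (hγ : 0 ≤ γ) (ha : ∀ n, 0 ≤ a n) (hy : IsRescaledSol W T γ a y) :
    Antitone fun n => W (y n) + T * y n := by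
  refine antitone_nat_of_succ_le fun n => ?_
  have := (hy.isUniqueMinimizer n).1 (y n)
  simp only [stepEnergy, sub_self] at this
  nlinarith [mul_nonneg (mul_nonneg (ha (n + 1)) hγ) (sq_nonneg (y (n + 1) - y n))]

theorem bddBelow_sub (hγ : 0 ≤ γ) (ha : ∀ n, 0 ≤ a n) (hT : 0 < T)
    (hW : Bornology.IsBounded (Set.range W)) (hy : IsRescaledSol W T γ a y) :
    BddBelow (Set.range fun n => y 0 - y n) := by
  obtain ⟨B, hB⟩ := hW.exists_norm_le
  refine ⟨-(2 * B / T), ?_⟩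
  rintro _ ⟨n, rfl⟩
  have hdecr : W (y n) + T * y n ≤ W (y 0) + T * y 0 := hy.antitone_add_mul hγ ha n.zero_le
  have h0 := abs_le.1 (hB _ ⟨y 0, rfl⟩)
  have hn := abs_le.1 (hB _ ⟨y n, rfl⟩)
  rw [neg_le, neg_sub, le_div_iff₀ hT]
  linarith

end IsRescaledSol

theorem stmt_13_general (W : ℝ → ℝ)
    (hWC1 : ContDiff ℝ 1 W)
    (hWper : Function.Periodic W 1)
    (γ : ℝ) (hγ : 0 < γ) (N : ℕ) (hN : 1 ≤ N)
    (a : ℕ → ℝ) (ha : ∀ n, 0 < a n) (haper : ∀ n : ℕ, a (n + N) = a n) :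
    (∀ T : ℝ, 0 < T → ∀ y : ℕ → ℝ, IsRescaledSol W T γ a y →
      ∃ L : ℝ, 0 ≤ L ∧
        Tendsto (fun n : ℕ => (y 0 - y n) / (n : ℝ)) atTop (nhds L)) ∧
    (∀ T : ℝ, 0 < T → ∀ y y' : ℕ → ℝ, IsRescaledSol W T γ a y →
      IsRescaledSol W T γ a y' → ∀ L L' : ℝ,
        Tendsto (fun n : ℕ => (y 0 - y n) / (n : ℝ)) atTop (nhds L) →
        Tendsto (fun n : ℕ => (y' 0 - y' n) / (n : ℝ)) atTop (nhds L') → L = L') ∧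
    (∀ T S : ℝ, 0 < T → T ≤ S → ∀ y z : ℕ → ℝ, IsRescaledSol W T γ a y →
      IsRescaledSol W S γ a z → ∀ L M : ℝ,
        Tendsto (fun n : ℕ => (y 0 - y n) / (n : ℝ)) atTop (nhds L) →
        Tendsto (fun n : ℕ => (z 0 - z n) / (n : ℝ)) atTop (nhds M) → L ≤ M) := by
  have ha₀ : ∀ n, 0 ≤ a n := fun n => (ha n).le
  refine ⟨fun T hT y hy => ?_, fun T _ y y' hy hy' L L' hL hL' => ?_,
    fun T S _ hTS y z hy hz L M hL hM => ?_⟩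
  · obtain ⟨L, hL⟩ :=
      exists_tendsto_div_of_abs_mul_add_sub_le (u := fun n => y 0 - y n) hN
        (hy.abs_sub_sub_le hWper hγ.le ha₀ haper)
    have hWbdd := hWper.isBounded_of_continuous one_ne_zero hWC1.continuous
    exact ⟨L, nonneg_of_tendsto_div_of_bddBelow (hy.bddBelow_sub hγ.le ha₀ hT hWbdd) hL, hL⟩
  · exact le_antisymm
      (le_of_tendsto_div_of_le_add (hy.sub_le_sub_add_one hWper hγ.le ha₀ le_rfl hy') hL hL')
      (le_of_tendsto_div_of_le_add (hy'.sub_le_sub_add_one hWper hγ.le ha₀ le_rfl hy) hL' hL)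
  · exact le_of_tendsto_div_of_le_add (hy.sub_le_sub_add_one hWper hγ.le ha₀ hTS hz) hL hM

/-- Existence of the homogenized velocity `f_γ(T,(a_n)) = lim (y₀ - y_n)/n ≥ 0` for
`N`-periodic perturbations, its independence of the initial datum, and its
monotonicity in `T`. -/
theorem stmt_13 (W : ℝ → ℝ)
    (hWC1 : ContDiff ℝ 1 W)
    (hWper : Function.Periodic W 1)
    (hWeven : ∀ s : ℝ, W (-s) = W s)
    (hWlip : ∃ L : NNReal, LipschitzWith L (deriv W))
    (hWnorm : sSup (Set.range fun s : ℝ => |deriv W s|) = 1)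
    (hWavg : ∫ s in (0:ℝ)..1, W s = 0)
    (γ : ℝ) (hγ : 0 < γ) (N : ℕ) (hN : 1 ≤ N)
    (a : ℕ → ℝ) (ha : ∀ n, 0 < a n) (haper : ∀ n : ℕ, a (n + N) = a n) :
    (∀ T : ℝ, 0 < T → ∀ y : ℕ → ℝ, IsRescaledSol W T γ a y →
      ∃ L : ℝ, 0 ≤ L ∧
        Tendsto (fun n : ℕ => (y 0 - y n) / (n : ℝ)) atTop (nhds L)) ∧
    (∀ T : ℝ, 0 < T → ∀ y y' : ℕ → ℝ, IsRescaledSol W T γ a y →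
      IsRescaledSol W T γ a y' → ∀ L L' : ℝ,
        Tendsto (fun n : ℕ => (y 0 - y n) / (n : ℝ)) atTop (nhds L) →
        Tendsto (fun n : ℕ => (y' 0 - y' n) / (n : ℝ)) atTop (nhds L') → L = L') ∧
    (∀ T S : ℝ, 0 < T → T ≤ S → ∀ y z : ℕ → ℝ, IsRescaledSol W T γ a y →
      IsRescaledSol W S γ a z → ∀ L M : ℝ,
        Tendsto (fun n : ℕ => (y 0 - y n) / (n : ℝ)) atTop (nhds L) →
        Tendsto (fun n : ℕ => (z 0 - z n) / (n : ℝ)) atTop (nhds M) → L ≤ M) :=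
  stmt_13_general W hWC1 hWper γ hγ N hN a ha haper
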